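/- arXiv:2009.09907 — 4 statements merged into one kernel-verified Lean document; each statement's English description precedes it below -/
import Mathlib

section
/- Let H be a real Hilbert space and let K ⊂ H be a compact convex subset. Then for every integer n ≥ 0 and every γ ≥ 1, the stable manifold width and the modified stable manifold width of K coincide: δ*_{n,γ}(K)_H = δ̄_{n,γ}(K)_H. -/
open Metric

def IsNorm {n : ℕ} (nrm : (Fin n → ℝ) → ℝ) : Prop :=
  (∀ x, 0 ≤ nrm x) ∧
  (∀ x, nrm x = 0 → x = 0) ∧
  (∀ (c : ℝ) (x), nrm (c • x) = |c| * nrm x) ∧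
  (∀ x y, nrm (x + y) ≤ nrm x + nrm y)

noncomputable def stableWidth (X : Type*) [NormedAddCommGroup X]
    (K : Set X) (n : ℕ) (γ : ℝ) : ℝ :=
  sInf { d | ∃ (nrm : (Fin n → ℝ) → ℝ) (a : X → Fin n → ℝ) (M : (Fin n → ℝ) → X),
    IsNorm nrm ∧
    (∀ f ∈ K, ∀ g ∈ K, nrm (a f - a g) ≤ γ * ‖f - g‖) ∧
    (∀ x y, ‖M x - M y‖ ≤ γ * nrm (x - y)) ∧
    d = ⨆ f : K, ‖(f : X) - M (a (f : X))‖ }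

noncomputable def modStableWidth (X : Type*) [NormedAddCommGroup X]
    (K : Set X) (n : ℕ) (γ : ℝ) : ℝ :=
  sInf { d | ∃ (nrm : (Fin n → ℝ) → ℝ) (a : X → Fin n → ℝ) (M : (Fin n → ℝ) → X),
    IsNorm nrm ∧
    (∀ f g : X, nrm (a f - a g) ≤ γ * ‖f - g‖) ∧
    (∀ x y, ‖M x - M y‖ ≤ γ * nrm (x - y)) ∧
    d = ⨆ f : K, ‖(f : X) - M (a (f : X))‖ }

noncomputable def entropyNumber (X : Type*) [NormedAddCommGroup X] (K : Set X) (n : ℕ) : ℝ :=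
  sInf { ε : ℝ | 0 < ε ∧ ∃ T : Finset X, T.card ≤ 2 ^ n ∧ K ⊆ ⋃ c ∈ T, closedBall c ε }

section aux

open RealInnerProductSpace

variable {H : Type*} [NormedAddCommGroup H] [InnerProductSpace ℝ H] [CompleteSpace H]

/-- Existence of a nonexpansive retraction onto a nonempty compact convex set. -/
lemma exists_proj (K : Set H) (hK : IsCompact K) (hconv : Convex ℝ K)
    (hne : K.Nonempty) :
    ∃ P : H → H, (∀ u, P u ∈ K) ∧ (∀ u ∈ K, P u = u) ∧
      ∀ u v, ‖P u - P v‖ ≤ ‖u - v‖ := by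
  have hcl : IsComplete K := hK.isClosed.isComplete
  have hex : ∀ u : H, ∃ v, v ∈ K ∧ ∀ w ∈ K, ⟪u - v, w - v⟫ ≤ 0 := by
    intro u
    obtain ⟨v, hvK, hv⟩ := exists_norm_eq_iInf_of_complete_convex hne hcl hconv u
    exact ⟨v, hvK, (norm_eq_iInf_iff_real_inner_le_zero hconv hvK).1 hv⟩
  choose P hPK hP using hex
  refine ⟨P, hPK, ?_, ?_⟩
  · intro u hu
    have := hP u u hu
    have h2 : ⟪u - P u, u - P u⟫ = ‖u - P u‖ ^ 2 := real_inner_self_eq_norm_sq _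
    have : ‖u - P u‖ ^ 2 ≤ 0 := by rw [← h2]; exact this
    have : ‖u - P u‖ = 0 := le_antisymm (by nlinarith [norm_nonneg (u - P u)]) (norm_nonneg _)
    exact (sub_eq_zero.1 (norm_eq_zero.1 this)).symm
  · intro u v
    have h1 := hP u (P v) (hPK v)
    have h2 := hP v (P u) (hPK u)
    have key : ‖P u - P v‖ ^ 2 ≤ ⟪u - v, P u - P v⟫ := by
      have hsq : ⟪P u - P v, P u - P v⟫ = ‖P u - P v‖ ^ 2 := real_inner_self_eq_norm_sq _
      have expand : ⟪u - v, P u - P v⟫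
          = ⟪u - P u, P u - P v⟫ + ⟪P u - P v, P u - P v⟫ + ⟪P v - v, P u - P v⟫ := by
        rw [← inner_add_left, ← inner_add_left]
        congr 1
        abel
      have e1' : (0:ℝ) ≤ ⟪u - P u, P u - P v⟫ := by
        have h : ⟪u - P u, P u - P v⟫ = - ⟪u - P u, P v - P u⟫ := by
          rw [← inner_neg_right]; congr 1; abel
        rw [h]; linarith [h1]
      have e2' : (0:ℝ) ≤ ⟪P v - v, P u - P v⟫ := by
        have h : ⟪P v - v, P u - P v⟫ = - ⟪v - P v, P u - P v⟫ := by
          rw [← inner_neg_left]; congr 1; abel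
        rw [h]; linarith [h2]
      rw [expand, hsq]; linarith
    have cs : ⟪u - v, P u - P v⟫ ≤ ‖u - v‖ * ‖P u - P v‖ :=
      real_inner_le_norm _ _
    nlinarith [norm_nonneg (P u - P v), norm_nonneg (u - v)]

end aux

/-- For a compact convex subset K of a real Hilbert space H,
the stable manifold width and the modified stable manifold width coincide. -/
theorem stmt0 {H : Type*} [NormedAddCommGroup H] [InnerProductSpace ℝ H] [CompleteSpace H]
    (K : Set H) (hK : IsCompact K) (hconv : Convex ℝ K)
    (n : ℕ) (γ : ℝ) (hγ : 1 ≤ γ) :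
    stableWidth H K n γ = modStableWidth H K n γ := by
  rcases Set.eq_empty_or_nonempty K with hKe | hne
  · -- both sets of candidate values are {0}
    have hwit : ∀ S : Set ℝ, (∀ d ∈ S, d = 0) → ((0:ℝ) ∈ S) → sInf S = 0 := by
      intro S h1 h2
      have : S = {0} := Set.eq_singleton_iff_unique_mem.2 ⟨h2, h1⟩
      rw [this, csInf_singleton]
    have hnrm : IsNorm (n := n) (fun x => ‖x‖) := by
      refine ⟨fun x => norm_nonneg x, fun x hx => norm_eq_zero.1 hx, ?_, ?_⟩
      · intro c x; show ‖c • x‖ = |c| * ‖x‖; rw [norm_smul, Real.norm_eq_abs]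
      · intro x y; exact norm_add_le x y
    have hzero : (fun x : Fin n → ℝ => ‖x‖) 0 = 0 := norm_zero
    have hsupz : ∀ (a : H → Fin n → ℝ) (M : (Fin n → ℝ) → H),
        (⨆ f : K, ‖(f : H) - M (a (f : H))‖) = 0 := by
      intro a M
      haveI : IsEmpty K := Set.isEmpty_coe_sort.2 hKe
      exact Real.iSup_of_isEmpty _
    have hγ0 : (0:ℝ) ≤ γ := le_trans zero_le_one hγ
    unfold stableWidth modStableWidth
    rw [hwit _ ?_ ?_, hwit _ ?_ ?_]
    · rintro d ⟨nrm, a, M, _, _, _, hd⟩; rw [hd, hsupz]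
    · refine ⟨fun x => ‖x‖, 0, fun _ => 0, hnrm, ?_, ?_, (hsupz 0 (fun _ => 0)).symm⟩
      · intro f g
        show ‖(0 : Fin n → ℝ) - 0‖ ≤ _
        rw [sub_zero, norm_zero]; positivity
      · intro x y
        show ‖(0:H) - 0‖ ≤ _
        rw [sub_zero, norm_zero]
        have := hnrm.1 (x - y); positivity
    · rintro d ⟨nrm, a, M, _, _, _, hd⟩; rw [hd, hsupz]
    · refine ⟨fun x => ‖x‖, 0, fun _ => 0, hnrm, ?_, ?_, (hsupz 0 (fun _ => 0)).symm⟩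
      · intro f _ g _
        show ‖(0 : Fin n → ℝ) - 0‖ ≤ _
        rw [sub_zero, norm_zero]; positivity
      · intro x y
        show ‖(0:H) - 0‖ ≤ _
        rw [sub_zero, norm_zero]
        have := hnrm.1 (x - y); positivity
  · obtain ⟨P, hPK, hPid, hPlip⟩ := exists_proj K hK hconv hne
    have hsets : { d | ∃ (nrm : (Fin n → ℝ) → ℝ) (a : H → Fin n → ℝ) (M : (Fin n → ℝ) → H),
        IsNorm nrm ∧
        (∀ f ∈ K, ∀ g ∈ K, nrm (a f - a g) ≤ γ * ‖f - g‖) ∧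
        (∀ x y, ‖M x - M y‖ ≤ γ * nrm (x - y)) ∧
        d = ⨆ f : K, ‖(f : H) - M (a (f : H))‖ } =
        { d | ∃ (nrm : (Fin n → ℝ) → ℝ) (a : H → Fin n → ℝ) (M : (Fin n → ℝ) → H),
        IsNorm nrm ∧
        (∀ f g : H, nrm (a f - a g) ≤ γ * ‖f - g‖) ∧
        (∀ x y, ‖M x - M y‖ ≤ γ * nrm (x - y)) ∧
        d = ⨆ f : K, ‖(f : H) - M (a (f : H))‖ } := by
      apply Set.Subset.antisymm
      · rintro d ⟨nrm, a, M, hnrm, ha, hM, hd⟩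
        refine ⟨nrm, a ∘ P, M, hnrm, ?_, hM, ?_⟩
        · intro f g
          calc nrm ((a ∘ P) f - (a ∘ P) g) ≤ γ * ‖P f - P g‖ :=
                ha (P f) (hPK f) (P g) (hPK g)
            _ ≤ γ * ‖f - g‖ := by
                have := hPlip f g
                nlinarith
        · rw [hd]
          congr 1
          funext f
          simp [hPid f f.2]
      · rintro d ⟨nrm, a, M, hnrm, ha, hM, hd⟩
        exact ⟨nrm, a, M, hnrm, fun f _ g _ => ha f g, hM, hd⟩
    unfold stableWidth modStableWidth
    rw [hsets]
end

section
/- Let K be a compact subset of a separable real Banach space X, let n ≥ 1 and γ ≥ 1, and suppose δ*_{n,γ}(K)_X = 0. Then K is γ-Lipschitz equivalent to a subset of ℝⁿ: there exist a norm ‖·‖_Y on ℝⁿ and an injective map F : K → ℝⁿ such that ‖F(f) − F(g)‖_Y ≤ γ‖f − g‖_X and ‖f − g‖_X ≤ γ‖F(f) − F(g)‖_Y for all f,g ∈ K (so that F⁻¹ : F(K) → K is γ-Lipschitz). -/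
open Metric

open Matrix

section AuxNorm
variable {n : ℕ} {nrm : (Fin n → ℝ) → ℝ}
variable {n : ℕ} {nrm : (Fin n → ℝ) → ℝ}

lemma IsNorm.zero (h : IsNorm nrm) : nrm 0 = 0 := by
  have := h.2.2.1 0 0
  simpa using this

lemma IsNorm.sub_le (h : IsNorm nrm) (x y : Fin n → ℝ) :
    nrm (x - y) ≤ nrm x + nrm y := by
  have hneg : nrm (-y) = nrm y := by
    have := h.2.2.1 (-1) y; simpa using this
  have := h.2.2.2 x (-y)
  simpa [sub_eq_add_neg, hneg] using this

lemma IsNorm.abs_sub_le (h : IsNorm nrm) (x y : Fin n → ℝ) :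
    |nrm x - nrm y| ≤ nrm (x - y) := by
  have hneg : ∀ z, nrm (-z) = nrm z := fun z => by
    have := h.2.2.1 (-1) z; simpa using this
  rw [abs_sub_le_iff]
  constructor
  · have := h.2.2.2 (x - y) y
    simpa using this
  · have := h.2.2.2 (y - x) x
    rw [sub_add_cancel] at this
    have h2 : nrm (y - x) = nrm (x - y) := by
      rw [← hneg (x - y)]; congr 1; abel
    linarith [this, h2]

lemma IsNorm.sum_le (h : IsNorm nrm) {ι : Type*} (s : Finset ι) (f : ι → Fin n → ℝ) :
    nrm (∑ i ∈ s, f i) ≤ ∑ i ∈ s, nrm (f i) := by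
  classical
  induction s using Finset.cons_induction with
  | empty => simp [h.zero]
  | cons a s ha ih =>
      rw [Finset.sum_cons, Finset.sum_cons]
      exact le_trans (h.2.2.2 _ _) (by linarith)

lemma IsNorm.le_bound (h : IsNorm nrm) :
    ∃ C : ℝ, 0 ≤ C ∧ ∀ x, nrm x ≤ C * ‖x‖ := by
  classical
  refine ⟨∑ i : Fin n, nrm (Pi.single i 1), Finset.sum_nonneg fun i _ => h.1 _, fun x => ?_⟩
  have hx : x = ∑ i : Fin n, x i • (Pi.single i (1:ℝ) : Fin n → ℝ) := by
    funext j
    simp [Pi.single_apply, Finset.sum_apply]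
  calc nrm x = nrm (∑ i : Fin n, x i • (Pi.single i (1:ℝ) : Fin n → ℝ)) := by rw [← hx]
    _ ≤ ∑ i : Fin n, nrm (x i • (Pi.single i (1:ℝ) : Fin n → ℝ)) := h.sum_le _ _
    _ ≤ ∑ i : Fin n, nrm (Pi.single i 1) * ‖x‖ := by
        refine Finset.sum_le_sum fun i _ => ?_
        rw [h.2.2.1]
        have : |x i| ≤ ‖x‖ := by
          simpa [Real.norm_eq_abs] using norm_le_pi_norm x i
        have hn := h.1 (Pi.single i (1:ℝ))
        calc |x i| * nrm (Pi.single i 1) ≤ ‖x‖ * nrm (Pi.single i 1) := by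
              exact mul_le_mul_of_nonneg_right this hn
          _ = nrm (Pi.single i 1) * ‖x‖ := mul_comm _ _
    _ = (∑ i : Fin n, nrm (Pi.single i 1)) * ‖x‖ := by rw [Finset.sum_mul]

lemma IsNorm.continuous (h : IsNorm nrm) : Continuous nrm := by
  obtain ⟨C, hC0, hC⟩ := h.le_bound
  rw [Metric.continuous_iff]
  intro x ε hε
  rcases eq_or_lt_of_le hC0 with hC0' | hC0'
  · refine ⟨1, one_pos, fun y _ => ?_⟩
    have h1 : nrm y ≤ 0 := by have := hC y; rw [← hC0'] at this; simpa using this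
    have h2 : nrm x ≤ 0 := by have := hC x; rw [← hC0'] at this; simpa using this
    have := h.1 x; have := h.1 y
    have : nrm y = nrm x := by linarith [h.1 x, h.1 y]
    simp [Real.dist_eq, this, hε]
  · refine ⟨ε / C, div_pos hε hC0', fun y hy => ?_⟩
    rw [Real.dist_eq]
    calc |nrm y - nrm x| ≤ nrm (y - x) := h.abs_sub_le _ _
      _ ≤ C * ‖y - x‖ := hC _
      _ < C * (ε / C) := by
          apply mul_lt_mul_of_pos_left _ hC0'
          rw [dist_eq_norm] at hy; exact hy
      _ = ε := by field_simp

lemma IsNorm.lower_bound (h : IsNorm nrm) (hn : 1 ≤ n) :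
    ∃ c : ℝ, 0 < c ∧ ∀ x, c * ‖x‖ ≤ nrm x := by
  have hS : IsCompact (sphere (0 : Fin n → ℝ) 1) := isCompact_sphere _ _
  have hne : (sphere (0 : Fin n → ℝ) 1).Nonempty := by
    have : Nonempty (Fin n) := ⟨⟨0, hn⟩⟩
    exact NormedSpace.sphere_nonempty.mpr zero_le_one
  obtain ⟨x₀, hx₀S, hmin⟩ := hS.exists_isMinOn hne (h.continuous.continuousOn)
  have hx₀ : nrm x₀ > 0 := by
    rcases lt_or_eq_of_le (h.1 x₀) with h' | h'
    · exact h'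
    · exfalso
      have := h.2.1 x₀ h'.symm
      rw [mem_sphere_iff_norm] at hx₀S
      rw [this] at hx₀S; simp at hx₀S
  refine ⟨nrm x₀, hx₀, fun x => ?_⟩
  rcases eq_or_ne x 0 with rfl | hx
  · simp [h.zero]
  · have hxn : ‖x‖ ≠ 0 := norm_ne_zero_iff.mpr hx
    have hxpos : 0 < ‖x‖ := norm_pos_iff.mpr hx
    have hmem : ‖x‖⁻¹ • x ∈ sphere (0 : Fin n → ℝ) 1 := by
      rw [mem_sphere_iff_norm, sub_zero, norm_smul]
      simp [abs_of_pos (inv_pos.mpr hxpos), inv_mul_cancel₀ hxn]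
    have hle : nrm x₀ ≤ nrm (‖x‖⁻¹ • x) := hmin hmem
    have h2 : nrm (‖x‖⁻¹ • x) = ‖x‖⁻¹ * nrm x := by
      rw [h.2.2.1]; congr 1; exact abs_of_pos (inv_pos.mpr hxpos)
    rw [h2] at hle
    calc nrm x₀ * ‖x‖ ≤ (‖x‖⁻¹ * nrm x) * ‖x‖ := by
          exact mul_le_mul_of_nonneg_right hle (le_of_lt hxpos)
      _ = nrm x := by field_simp

lemma IsNorm.auerbach (h : IsNorm nrm) (hn : 1 ≤ n) :
    ∃ A : Matrix (Fin n) (Fin n) ℝ, A.det ≠ 0 ∧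
      (∀ t, ‖t‖ ≤ nrm (A *ᵥ t)) ∧ (∀ t, nrm (A *ᵥ t) ≤ n * ‖t‖) := by
  classical
  obtain ⟨c, hc0, hc⟩ := h.lower_bound hn
  set T : Set (Fin n → Fin n → ℝ) := {v | ∀ j, nrm (v j) ≤ 1} with hT
  have hTclosed : IsClosed T := by
    have : T = ⋂ j, {v : Fin n → Fin n → ℝ | nrm (v j) ≤ 1} := by
      ext v; simp [hT, Set.mem_iInter]
    rw [this]
    exact isClosed_iInter fun j =>
      IsClosed.preimage (h.continuous.comp (continuous_apply j)) isClosed_Iic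
  have hTbdd : Bornology.IsBounded T := by
    rw [Metric.isBounded_iff_subset_closedBall 0]
    refine ⟨c⁻¹, fun v hv => ?_⟩
    rw [mem_closedBall, dist_zero_right]
    refine (pi_norm_le_iff_of_nonneg (by positivity)).mpr fun j => ?_
    have h1 := hc (v j)
    have h2 := hv j
    have h3 : ‖v j‖ ≤ 1 / c := (le_div_iff₀ hc0).mpr (by nlinarith [norm_nonneg (v j)])
    simpa [one_div] using h3
  have hTcomp : IsCompact T := Metric.isCompact_of_isClosed_isBounded hTclosed hTbdd
  have hT0 : (0 : Fin n → Fin n → ℝ) ∈ T := fun j => by simp [h.zero]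
  set g : (Fin n → Fin n → ℝ) → ℝ := fun v => |(Matrix.of fun i j => v j i).det| with hg
  have hgcont : Continuous g := by
    apply Continuous.abs
    apply Continuous.matrix_det
    exact continuous_matrix fun i j => (continuous_apply i).comp (continuous_apply j)
  obtain ⟨v₀, hv₀T, hmax⟩ := hTcomp.exists_isMaxOn ⟨0, hT0⟩ hgcont.continuousOn
  set A : Matrix (Fin n) (Fin n) ℝ := Matrix.of fun i j => v₀ j i with hA
  -- positive det witness
  have hsingle : ∀ j : Fin n, 0 < nrm ((Pi.single j (1:ℝ) : Fin n → ℝ)) := by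
    intro j
    rcases lt_or_eq_of_le (h.1 ((Pi.single j (1:ℝ) : Fin n → ℝ))) with h' | h'
    · exact h'
    · exfalso
      have := h.2.1 _ h'.symm
      have := congrFun this j
      simp at this
  have hdetpos : 0 < g v₀ := by
    set w : Fin n → Fin n → ℝ := fun j => (nrm ((Pi.single j (1:ℝ) : Fin n → ℝ)))⁻¹ • (Pi.single j (1:ℝ) : Fin n → ℝ) with hw
    have hwT : w ∈ T := by
      intro j
      rw [hw]
      simp only
      rw [h.2.2.1]
      rw [abs_of_pos (inv_pos.mpr (hsingle j))]
      rw [inv_mul_cancel₀ (ne_of_gt (hsingle j))]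
    have hgw : g w = ∏ j : Fin n, (nrm ((Pi.single j (1:ℝ) : Fin n → ℝ)))⁻¹ := by
      have : (Matrix.of fun i j => w j i) = Matrix.diagonal (fun j => (nrm ((Pi.single j (1:ℝ) : Fin n → ℝ)))⁻¹) := by
        ext i j
        simp only [Matrix.of_apply, hw, Pi.smul_apply, smul_eq_mul, Matrix.diagonal_apply,
          Pi.single_apply]
        by_cases hij : i = j <;> simp [hij, eq_comm]
      rw [hg]; simp only [this, Matrix.det_diagonal]
      rw [abs_of_pos]
      exact Finset.prod_pos fun j _ => inv_pos.mpr (hsingle j)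
    have : 0 < g w := by
      rw [hgw]; exact Finset.prod_pos fun j _ => inv_pos.mpr (hsingle j)
    exact lt_of_lt_of_le this (hmax hwT)
  have hga : g v₀ = |A.det| := rfl
  have hdet : A.det ≠ 0 := by
    intro hd
    rw [hga, hd] at hdetpos; simp at hdetpos
  have hmv : ∀ t : Fin n → ℝ, A *ᵥ t = ∑ j : Fin n, t j • v₀ j := by
    intro t; funext i
    rw [Matrix.mulVec, dotProduct]
    rw [Finset.sum_apply]
    exact Finset.sum_congr rfl fun j _ => by
      simp [hA, mul_comm]
  have hinj : ∀ t : Fin n → ℝ, A *ᵥ t = 0 → t = 0 := by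
    intro t ht
    have : A⁻¹ *ᵥ (A *ᵥ t) = t := by
      rw [Matrix.mulVec_mulVec, Matrix.nonsing_inv_mul A (isUnit_iff_ne_zero.mpr hdet),
        Matrix.one_mulVec]
    rw [ht, Matrix.mulVec_zero] at this
    exact this.symm
  have hcramer : ∀ t : Fin n → ℝ, Matrix.cramer A (A *ᵥ t) = A.det • t := by
    intro t
    have h1 := Matrix.mulVec_cramer A (A *ᵥ t)
    have h2 : A.det • (A *ᵥ t) = A *ᵥ (A.det • t) := (Matrix.mulVec_smul A A.det t).symm
    rw [h2] at h1
    have h3 : A *ᵥ (Matrix.cramer A (A *ᵥ t) - A.det • t) = 0 := by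
      rw [Matrix.mulVec_sub, h1, sub_self]
    have := hinj _ h3
    have := sub_eq_zero.mp this
    exact this
  refine ⟨A, hdet, ?_, ?_⟩
  · intro t
    have hs0 : 0 ≤ nrm (A *ᵥ t) := h.1 _
    refine (pi_norm_le_iff_of_nonneg hs0).mpr fun j => ?_
    rw [Real.norm_eq_abs]
    set s := nrm (A *ᵥ t) with hsdef
    rcases eq_or_lt_of_le hs0 with hs | hs
    · have : A *ᵥ t = 0 := h.2.1 _ hs.symm
      have := hinj _ this
      simp [this, ← hs]
    · -- main case
      set u : Fin n → ℝ := s⁻¹ • (A *ᵥ t) with hu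
      set w : Fin n → Fin n → ℝ := Function.update v₀ j u with hwdef
      have hwT : w ∈ T := by
        intro l
        rcases eq_or_ne l j with rfl | hl
        · rw [hwdef, Function.update_self, hu, h.2.2.1,
            abs_of_pos (inv_pos.mpr hs), inv_mul_cancel₀ (ne_of_gt hs)]
        · rw [hwdef, Function.update_of_ne hl]; exact hv₀T l
      have hgweq : g w = |s⁻¹| * (|A.det| * |t j|) := by
        have hmat : (Matrix.of fun i l => w l i) = A.updateCol j u := by
          ext i l
          rw [Matrix.updateCol_apply]
          simp only [Matrix.of_apply, hwdef, Function.update_apply]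
          by_cases hlj : l = j <;> simp [hlj, hA]
        have hval : g w = |(A.updateCol j u).det| := by
          rw [hg]; simp only; rw [hmat]
        rw [hval, ← Matrix.cramer_apply]
        have hcu : A.cramer u = s⁻¹ • (A.det • t) := by
          rw [hu, _root_.map_smul, hcramer t]
        rw [hcu]
        simp [abs_mul, smul_eq_mul]
      have hle : g w ≤ g v₀ := hmax hwT
      rw [hga, hgweq] at hle
      rw [abs_of_pos (inv_pos.mpr hs)] at hle
      have hdetabs : 0 < |A.det| := abs_pos.mpr hdet
      have h1 : |A.det| * |t j| ≤ s * |A.det| := by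
        calc |A.det| * |t j| = s * (s⁻¹ * (|A.det| * |t j|)) := by
              rw [← mul_assoc, mul_inv_cancel₀ (ne_of_gt hs), one_mul]
          _ ≤ s * |A.det| := mul_le_mul_of_nonneg_left hle (le_of_lt hs)
      exact le_of_mul_le_mul_left (by linarith [h1]) hdetabs
  · intro t
    rw [hmv]
    calc nrm (∑ j : Fin n, t j • v₀ j) ≤ ∑ j : Fin n, nrm (t j • v₀ j) := h.sum_le _ _
      _ ≤ ∑ j : Fin n, ‖t‖ := by
          refine Finset.sum_le_sum fun j _ => ?_
          rw [h.2.2.1]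
          have h1 : |t j| ≤ ‖t‖ := by
            simpa [Real.norm_eq_abs] using norm_le_pi_norm t j
          have h2 : nrm (v₀ j) ≤ 1 := hv₀T j
          nlinarith [h.1 (v₀ j), abs_nonneg (t j)]
      _ = n * ‖t‖ := by simp [Finset.sum_const, nsmul_eq_mul]
lemma isNorm_norm : IsNorm (fun x : Fin n → ℝ => ‖x‖) :=
  ⟨fun x => norm_nonneg x, fun x hx => norm_eq_zero.mp hx,
    fun c x => by simp [norm_smul, Real.norm_eq_abs],
    fun x y => norm_add_le x y⟩
end AuxNorm

/-- If the stable manifold width δ*_{n,γ}(K)_X vanishes then K is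
γ-Lipschitz equivalent to a subset of ℝⁿ (with some norm on ℝⁿ). -/
theorem stmt3 {X : Type*} [NormedAddCommGroup X] [NormedSpace ℝ X] [CompleteSpace X]
    [TopologicalSpace.SeparableSpace X]
    (K : Set X) (hK : IsCompact K) {n : ℕ} (hn : 1 ≤ n) (γ : ℝ) (hγ : 1 ≤ γ)
    (h0 : stableWidth X K n γ = 0) :
    ∃ (nrm : (Fin n → ℝ) → ℝ) (F : K → Fin n → ℝ),
      IsNorm nrm ∧ Function.Injective F ∧
      (∀ f g : K, nrm (F f - F g) ≤ γ * ‖(f : X) - (g : X)‖) ∧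
      (∀ f g : K, ‖(f : X) - (g : X)‖ ≤ γ * nrm (F f - F g)) := by
  classical
  have hγ0 : (0:ℝ) < γ := lt_of_lt_of_le one_pos hγ
  rcases K.eq_empty_or_nonempty with hKe | ⟨f₀, hf₀⟩
  · have hno : ∀ f : K, False := fun f => by
      exact Set.eq_empty_iff_forall_notMem.mp hKe _ f.2
    exact ⟨fun x => ‖x‖, fun f => 0, isNorm_norm, fun f => (hno f).elim,
      fun f => (hno f).elim, fun f => (hno f).elim⟩
  -- bound on K
  obtain ⟨R, hR0, hR⟩ : ∃ R, 0 ≤ R ∧ ∀ f ∈ K, ‖f‖ ≤ R := by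
    obtain ⟨R, hR⟩ := (hK.isBounded).exists_norm_le
    exact ⟨max R 0, le_max_right _ _, fun f hf => le_trans (hR f hf) (le_max_left _ _)⟩
  have hdist : ∀ f ∈ K, ∀ g ∈ K, ‖f - g‖ ≤ 2 * R := by
    intro f hf g hg
    calc ‖f - g‖ ≤ ‖f‖ + ‖g‖ := norm_sub_le f g
      _ ≤ 2 * R := by linarith [hR f hf, hR g hg]
  set S := { d | ∃ (nrm : (Fin n → ℝ) → ℝ) (a : X → Fin n → ℝ) (M : (Fin n → ℝ) → X),
    IsNorm nrm ∧
    (∀ f ∈ K, ∀ g ∈ K, nrm (a f - a g) ≤ γ * ‖f - g‖) ∧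
    (∀ x y, ‖M x - M y‖ ≤ γ * nrm (x - y)) ∧
    d = ⨆ f : K, ‖(f : X) - M (a (f : X))‖ } with hSdef
  have h0' : sInf S = 0 := h0
  have hSne : S.Nonempty := by
    refine ⟨⨆ f : K, ‖(f : X) - (0:X)‖, fun x => ‖x‖, fun _ => 0, fun _ => 0,
      isNorm_norm, ?_, ?_, rfl⟩
    · intro f _ g _; simp; positivity
    · intro x y; simp only [sub_self, norm_zero]
      positivity
  -- per-k data
  have key : ∀ k : ℕ, ∃ (p : (Fin n → ℝ) → ℝ) (b : X → Fin n → ℝ),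
      IsNorm p ∧ (∀ x, ‖x‖ ≤ p x) ∧ (∀ x, p x ≤ n * ‖x‖) ∧
      (∀ f ∈ K, ∀ g ∈ K, p (b f - b g) ≤ γ * ‖f - g‖) ∧
      (∀ f ∈ K, ‖b f‖ ≤ γ * (2 * R)) ∧
      (∀ f ∈ K, ∀ g ∈ K, ‖f - g‖ ≤ 2 / ((k:ℝ) + 1) + γ * p (b f - b g)) := by
    intro k
    have hεpos : (0:ℝ) < 1 / ((k:ℝ) + 1) := by positivity
    obtain ⟨d, hdS, hdlt⟩ := Real.lt_sInf_add_pos hSne hεpos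
    rw [h0', zero_add] at hdlt
    obtain ⟨nrm0, a0, M0, hN, hLa, hLM, hdval⟩ := hdS
    -- sup bound
    have hbdd : BddAbove (Set.range fun f : K => ‖(f : X) - M0 (a0 (f : X))‖) := by
      refine ⟨2 * R + ‖(f₀ : X) - M0 (a0 f₀)‖ + γ * (γ * (2 * R)), ?_⟩
      rintro y ⟨f, rfl⟩
      have h1 : ‖(f:X) - M0 (a0 (f:X))‖ ≤ ‖(f:X) - f₀‖ + ‖f₀ - M0 (a0 f₀)‖
          + ‖M0 (a0 f₀) - M0 (a0 (f:X))‖ := by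
        have := norm_add₃_le (a := (f:X) - f₀) (b := f₀ - M0 (a0 f₀))
          (c := M0 (a0 f₀) - M0 (a0 (f:X)))
        simpa using this
      have h2 : ‖(f:X) - f₀‖ ≤ 2 * R := hdist _ f.2 _ hf₀
      have h3 : ‖M0 (a0 f₀) - M0 (a0 (f:X))‖ ≤ γ * (γ * (2 * R)) := by
        calc ‖M0 (a0 f₀) - M0 (a0 (f:X))‖ ≤ γ * nrm0 (a0 f₀ - a0 (f:X)) := hLM _ _
          _ ≤ γ * (γ * ‖f₀ - (f:X)‖) := by
              exact mul_le_mul_of_nonneg_left (hLa _ hf₀ _ f.2) (le_of_lt hγ0)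
          _ ≤ γ * (γ * (2 * R)) := by
              have := hdist _ hf₀ _ f.2
              nlinarith [mul_pos hγ0 hγ0]
      linarith
    have happrox : ∀ f ∈ K, ‖f - M0 (a0 f)‖ ≤ 1 / ((k:ℝ) + 1) := by
      intro f hf
      have : ‖f - M0 (a0 f)‖ ≤ d := by
        rw [hdval]
        exact le_ciSup hbdd ⟨f, hf⟩
      linarith
    obtain ⟨A, hdet, hlow, hup⟩ := hN.auerbach hn
    have hAunit : IsUnit A.det := isUnit_iff_ne_zero.mpr hdet
    have hAA : ∀ u : Fin n → ℝ, A *ᵥ (A⁻¹ *ᵥ u) = u := by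
      intro u
      rw [Matrix.mulVec_mulVec, Matrix.mul_nonsing_inv _ hAunit, Matrix.one_mulVec]
    set p : (Fin n → ℝ) → ℝ := fun x => nrm0 (A *ᵥ x) with hpdef
    set b : X → Fin n → ℝ := fun f => A⁻¹ *ᵥ (a0 f - a0 f₀) with hbdef
    have hkey : ∀ f g : X, p (b f - b g) = nrm0 (a0 f - a0 g) := by
      intro f g
      have : A *ᵥ (b f - b g) = a0 f - a0 g := by
        rw [hbdef]
        simp only
        rw [Matrix.mulVec_sub, hAA, hAA]
        abel
      show nrm0 (A *ᵥ (b f - b g)) = nrm0 (a0 f - a0 g)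
      rw [this]
    have hpnorm : IsNorm p := by
      refine ⟨fun x => hN.1 _, fun x hx => ?_, fun c x => ?_, fun x y => ?_⟩
      · have h' : ‖x‖ ≤ p x := hlow x
        rw [hx] at h'
        exact norm_le_zero_iff.mp h'
      · show nrm0 (A *ᵥ (c • x)) = |c| * nrm0 (A *ᵥ x)
        rw [Matrix.mulVec_smul]
        exact hN.2.2.1 c _
      · show nrm0 (A *ᵥ (x + y)) ≤ nrm0 (A *ᵥ x) + nrm0 (A *ᵥ y)
        rw [Matrix.mulVec_add]
        exact hN.2.2.2 _ _
    refine ⟨p, b, hpnorm, hlow, hup, ?_, ?_, ?_⟩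
    · intro f hf g hg
      rw [hkey]
      exact hLa f hf g hg
    · intro f hf
      calc ‖b f‖ ≤ p (b f) := hlow _
        _ = nrm0 (a0 f - a0 f₀) := by
            show nrm0 (A *ᵥ (b f)) = nrm0 (a0 f - a0 f₀)
            rw [hAA]
        _ ≤ γ * ‖f - f₀‖ := hLa f hf f₀ hf₀
        _ ≤ γ * (2 * R) := by
            have := hdist f hf f₀ hf₀
            nlinarith
    · intro f hf g hg
      rw [hkey]
      have h1 : ‖f - g‖ ≤ ‖f - M0 (a0 f)‖ + ‖M0 (a0 f) - M0 (a0 g)‖ + ‖M0 (a0 g) - g‖ := by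
        have := norm_add₃_le (a := f - M0 (a0 f)) (b := M0 (a0 f) - M0 (a0 g))
          (c := M0 (a0 g) - g)
        simpa using this
      have h2 := happrox f hf
      have h3 := happrox g hg
      have h3' : ‖M0 (a0 g) - g‖ ≤ 1 / ((k:ℝ) + 1) := by
        rw [norm_sub_rev]; exact h3
      have h4 := hLM (a0 f) (a0 g)
      have : 2 / ((k:ℝ) + 1) = 1 / ((k:ℝ) + 1) + 1 / ((k:ℝ) + 1) := by ring
      rw [this]
      linarith
  choose p b hpN hplow hpup hpLip hpbdd hplower using key
  -- ultrafilter
  set 𝒰 : Ultrafilter ℕ := Ultrafilter.of Filter.atTop with h𝒰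
  have hUle : (𝒰 : Filter ℕ) ≤ Filter.atTop := Ultrafilter.of_le _
  -- limits
  have hlimR : ∀ (u : ℕ → ℝ) (lo hi : ℝ), (∀ k, u k ∈ Set.Icc lo hi) →
      ∃ L, Filter.Tendsto u (𝒰 : Filter ℕ) (nhds L) := by
    intro u lo hi hu
    have hcle : (Ultrafilter.map u 𝒰 : Filter ℝ) ≤ Filter.principal (Set.Icc lo hi) := by
      rw [Filter.le_principal_iff]
      exact Filter.mem_map.mpr (Filter.univ_mem' hu)
    obtain ⟨L, _, hL⟩ := (isCompact_Icc (a := lo) (b := hi)).ultrafilter_le_nhds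
      (Ultrafilter.map u 𝒰) hcle
    exact ⟨L, hL⟩
  have hlimV : ∀ (u : ℕ → Fin n → ℝ) (Rad : ℝ), (∀ k, ‖u k‖ ≤ Rad) →
      ∃ L, Filter.Tendsto u (𝒰 : Filter ℕ) (nhds L) := by
    intro u Rad hu
    have hcle : (Ultrafilter.map u 𝒰 : Filter (Fin n → ℝ)) ≤
        Filter.principal (closedBall 0 Rad) := by
      rw [Filter.le_principal_iff]
      refine Filter.mem_map.mpr (Filter.univ_mem' fun k => ?_)
      rw [Set.mem_preimage, mem_closedBall, dist_zero_right]
      exact hu k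
    obtain ⟨L, _, hL⟩ := (isCompact_closedBall (0 : Fin n → ℝ) Rad).ultrafilter_le_nhds
      (Ultrafilter.map u 𝒰) hcle
    exact ⟨L, hL⟩
  have hPex : ∀ x : Fin n → ℝ, ∃ L, Filter.Tendsto (fun k => p k x) (𝒰 : Filter ℕ) (nhds L) := by
    intro x
    exact hlimR _ 0 ((n:ℝ) * ‖x‖) fun k =>
      ⟨le_trans (norm_nonneg x) (hplow k x), hpup k x⟩
  choose P hP using hPex
  have hFex : ∀ f : K, ∃ L, Filter.Tendsto (fun k => b k (f : X)) (𝒰 : Filter ℕ) (nhds L) := by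
    intro f
    exact hlimV _ (γ * (2 * R)) fun k => hpbdd k _ f.2
  choose F hF using hFex
  -- P is a norm
  have hPlow : ∀ x, ‖x‖ ≤ P x := by
    intro x
    exact ge_of_tendsto' (hP x) fun k => hplow k x
  have hPN : IsNorm P := by
    refine ⟨fun x => le_trans (norm_nonneg x) (hPlow x), fun x hx => ?_, fun c x => ?_,
      fun x y => ?_⟩
    · have := hPlow x; rw [hx] at this; exact norm_le_zero_iff.mp this
    · have h1 : Filter.Tendsto (fun k => p k (c • x)) (𝒰 : Filter ℕ) (nhds (P (c • x))) := hP _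
      have h2 : Filter.Tendsto (fun k => p k (c • x)) (𝒰 : Filter ℕ) (nhds (|c| * P x)) := by
        have : (fun k => p k (c • x)) = fun k => |c| * p k x := by
          funext k; exact (hpN k).2.2.1 c x
        rw [this]
        exact (hP x).const_mul |c|
      exact tendsto_nhds_unique h1 h2
    · exact le_of_tendsto_of_tendsto' (hP (x + y)) ((hP x).add (hP y))
        fun k => (hpN k).2.2.2 x y
  have hP0 : P 0 = 0 := by
    have := hPN.2.2.1 0 0
    simpa using this
  -- key tendsto
  have hkeyT : ∀ f g : K, Filter.Tendsto (fun k => p k (b k (f:X) - b k (g:X)))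
      (𝒰 : Filter ℕ) (nhds (P (F f - F g))) := by
    intro f g
    have hVb : Filter.Tendsto (fun k => b k (f:X) - b k (g:X)) (𝒰 : Filter ℕ)
        (nhds (F f - F g)) := (hF f).sub (hF g)
    have hdiff0 : Filter.Tendsto (fun k => (b k (f:X) - b k (g:X)) - (F f - F g))
        (𝒰 : Filter ℕ) (nhds 0) := by
      have := hVb.sub (tendsto_const_nhds (x := F f - F g))
      simpa using this
    have hnorm0 : Filter.Tendsto (fun k => (n:ℝ) * ‖(b k (f:X) - b k (g:X)) - (F f - F g)‖)
        (𝒰 : Filter ℕ) (nhds 0) := by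
      have := (hdiff0.norm).const_mul (n:ℝ)
      simpa using this
    have hd2 : Filter.Tendsto (fun k => p k (b k (f:X) - b k (g:X)) - p k (F f - F g))
        (𝒰 : Filter ℕ) (nhds 0) := by
      apply squeeze_zero_norm _ hnorm0
      intro k
      calc ‖p k (b k (f:X) - b k (g:X)) - p k (F f - F g)‖
          = |p k (b k (f:X) - b k (g:X)) - p k (F f - F g)| := rfl
        _ ≤ p k ((b k (f:X) - b k (g:X)) - (F f - F g)) := (hpN k).abs_sub_le _ _
        _ ≤ (n:ℝ) * ‖(b k (f:X) - b k (g:X)) - (F f - F g)‖ := hpup k _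
    have := hd2.add (hP (F f - F g))
    simpa using this
  refine ⟨P, F, hPN, ?_, ?_, ?_⟩
  · -- injective
    intro f g hfg
    have h1 : P (F f - F g) = 0 := by rw [hfg, sub_self, hP0]
    have h2 : ‖(f:X) - (g:X)‖ ≤ γ * P (F f - F g) := by
      have hc : Filter.Tendsto (fun k : ℕ => 2 / ((k:ℝ) + 1)) (𝒰 : Filter ℕ) (nhds 0) := by
        have : Filter.Tendsto (fun k : ℕ => 2 / ((k:ℝ) + 1)) Filter.atTop (nhds 0) := by
          have := tendsto_one_div_add_atTop_nhds_zero_nat.const_mul (2:ℝ)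
          simpa [div_eq_mul_inv, mul_comm] using this
        exact this.mono_left hUle
      have hT : Filter.Tendsto (fun k : ℕ => 2 / ((k:ℝ) + 1) + γ * p k (b k (f:X) - b k (g:X)))
          (𝒰 : Filter ℕ) (nhds (γ * P (F f - F g))) := by
        have := hc.add ((hkeyT f g).const_mul γ)
        simpa using this
      exact ge_of_tendsto' hT fun k => hplower k _ f.2 _ g.2
    rw [h1, mul_zero] at h2
    have : (f:X) = (g:X) := by
      have := norm_le_zero_iff.mp h2
      exact sub_eq_zero.mp this
    exact Subtype.ext this
  · -- upper
    intro f g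
    exact le_of_tendsto' (hkeyT f g) fun k => hpLip k _ f.2 _ g.2
  · -- lower
    intro f g
    have hc : Filter.Tendsto (fun k : ℕ => 2 / ((k:ℝ) + 1)) (𝒰 : Filter ℕ) (nhds 0) := by
      have : Filter.Tendsto (fun k : ℕ => 2 / ((k:ℝ) + 1)) Filter.atTop (nhds 0) := by
        have := tendsto_one_div_add_atTop_nhds_zero_nat.const_mul (2:ℝ)
        simpa [div_eq_mul_inv, mul_comm] using this
      exact this.mono_left hUle
    have hT : Filter.Tendsto (fun k : ℕ => 2 / ((k:ℝ) + 1) + γ * p k (b k (f:X) - b k (g:X)))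
        (𝒰 : Filter ℕ) (nhds (γ * P (F f - F g))) := by
      have := hc.add ((hkeyT f g).const_mul γ)
      simpa using this
    exact ge_of_tendsto' hT fun k => hplower k _ f.2 _ g.2
end

section
/- Let (α_j)_{j≥1} be a strictly decreasing sequence of positive real numbers converging to 0, and in X = ℓ₂(ℕ) let K := {α_j e_j : j ≥ 1} ∪ {0}, where (e_j) is the canonical orthonormal basis. Then: (a) the manifold width satisfies δ_n(K)_{ℓ₂} = 0 for every n ≥ 1; (b) ε_n(K)_{ℓ₂} ≥ (1/2) α_{2^n} for every n ≥ 1. In particular, for any r > 0, choosing α_j := (1 + log₂ j)^{-r/2} yields a compact set K with δ_n(K)_{ℓ₂} = 0 ≤ n^{-r} for all n ≥ 1 while ε_n(K)_{ℓ₂} ≥ (1/2)(n+1)^{-r/2} for all n ≥ 1, so no Carl-type inequality can hold for the manifold widths. -/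
/-!
Since `(α_j)` is strictly decreasing, the norm `t = ‖x‖` identifies a point `x ∈ K`. Summing the
ramps `t ↦ clamp((t - α_{j+1}) / (α_j - α_{j+1}))` against the increments
`α_j e_j - α_{j+1} e_{j+1}` for `j ≤ N` telescopes to a continuous path `ℝ → ℓ₂` that sends `α_j`
to `α_j e_j - α_{N+1} e_{N+1}` for `j ≤ N` and every `t ≤ α_{N+1}` to `0`. Decoding `‖x‖` along
this path reproduces `K` up to `α_{N+1} → 0`, in any dimension `n ≥ 1`.

The `2ⁿ + 1` points `0, α_1 e_1, …, α_{2ⁿ} e_{2ⁿ}` of `K` are pairwise at distance at least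
`α_{2ⁿ}` (compare the coordinate of the larger index), so by pigeonhole no `2ⁿ` balls of radius
below `α_{2ⁿ} / 2` cover `K`.
-/

open Metric

/-- The manifold width `δ_n(K)_X`: the infimum of `sup_{f ∈ K} ‖f - M (a f)‖` over all
maps `a : K → ℝⁿ` continuous on `K` and continuous maps `M : ℝⁿ → X`. -/
noncomputable def manifoldWidth (X : Type*) [NormedAddCommGroup X] (K : Set X) (n : ℕ) : ℝ :=
  sInf { d | ∃ (a : X → Fin n → ℝ) (M : (Fin n → ℝ) → X),
    ContinuousOn a K ∧ Continuous M ∧ d = ⨆ f : K, ‖(f : X) - M (a (f : X))‖ }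

noncomputable abbrev ellTwo : Type := lp (fun _ : ℕ => ℝ) 2

/-- The set K = {α_j e_j : j ≥ 1} ∪ {0} ⊂ ℓ₂(ℕ). -/
noncomputable def Kset (α : ℕ → ℝ) : Set ellTwo :=
  {x | ∃ j : ℕ, 1 ≤ j ∧ x = α j • lp.single 2 j (1 : ℝ)} ∪ {0}

section Widths

variable {X : Type*} [NormedAddCommGroup X]

theorem manifoldWidth_nonneg (K : Set X) (n : ℕ) : 0 ≤ manifoldWidth X K n := by
  refine Real.sInf_nonneg ?_
  rintro d ⟨a, M, -, -, rfl⟩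
  exact Real.iSup_nonneg fun f => norm_nonneg _

theorem manifoldWidth_le {K : Set X} {n : ℕ} {ε : ℝ} (hε : 0 ≤ ε) (a : X → Fin n → ℝ)
    (M : (Fin n → ℝ) → X) (ha : ContinuousOn a K) (hM : Continuous M)
    (hK : ∀ f ∈ K, ‖f - M (a f)‖ ≤ ε) : manifoldWidth X K n ≤ ε := by
  unfold manifoldWidth
  refine csInf_le_of_le (b := ⨆ f : K, ‖(f : X) - M (a f)‖) ⟨0, ?_⟩ ⟨a, M, ha, hM, rfl⟩
    (Real.iSup_le (fun f => hK f f.2) hε)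
  rintro d ⟨a, M, -, -, rfl⟩
  exact Real.iSup_nonneg fun f => norm_nonneg _

theorem manifoldWidth_eq_zero_of_forall_approx {K : Set X} {n : ℕ}
    (h : ∀ ε > 0, ∃ (a : X → Fin n → ℝ) (M : (Fin n → ℝ) → X),
      ContinuousOn a K ∧ Continuous M ∧ ∀ f ∈ K, ‖f - M (a f)‖ ≤ ε) :
    manifoldWidth X K n = 0 := by
  refine le_antisymm (le_of_forall_pos_le_add fun ε hε => ?_) (manifoldWidth_nonneg K n)
  obtain ⟨a, M, ha, hM, hK⟩ := h ε hε
  simpa using manifoldWidth_le hε.le a M ha hM hK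

theorem le_entropyNumber_of_pairwise_le_dist {K : Set X} (hK : Bornology.IsBounded K)
    {n m : ℕ} (hm : 2 ^ n < m) {δ : ℝ} (p : Fin m → X) (hpK : ∀ i, p i ∈ K)
    (hsep : Pairwise fun i j => δ ≤ dist (p i) (p j)) : δ / 2 ≤ entropyNumber X K n := by
  obtain ⟨R, hR⟩ := (isBounded_iff_subset_closedBall 0).mp hK
  refine le_csInf ⟨max R 1, by positivity, {0}, by simp [Nat.one_le_two_pow], ?_⟩ ?_
  · simpa using hR.trans (closedBall_subset_closedBall (le_max_left R 1))
  rintro ε ⟨-, T, hT, hcover⟩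
  choose c hcT hpc using fun i => Set.mem_iUnion₂.mp (hcover (hpK i))
  obtain ⟨i, -, j, -, hij, hcij⟩ := Finset.exists_ne_map_eq_of_card_lt_of_maps_to
    (s := Finset.univ) (t := T) (by simpa using hT.trans_lt hm) (fun i _ => hcT i)
  have := calc δ ≤ dist (p i) (p j) := hsep hij
    _ ≤ dist (p i) (c i) + dist (p j) (c j) := by rw [hcij]; exact dist_triangle_right _ _ _
    _ ≤ ε + ε := add_le_add (hpc i) (hpc j)
  linarith

end Widths

noncomputable def ramp (a b t : ℝ) : ℝ := max 0 (min 1 ((t - a) / (b - a)))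

theorem continuous_ramp (a b : ℝ) : Continuous (ramp a b) := by
  unfold ramp; fun_prop

theorem ramp_of_le {a b t : ℝ} (hab : a < b) (ht : t ≤ a) : ramp a b t = 0 :=
  max_eq_left <| (min_le_right _ _).trans <|
    div_nonpos_of_nonpos_of_nonneg (by linarith) (by linarith)

theorem ramp_of_ge {a b t : ℝ} (hab : a < b) (ht : b ≤ t) : ramp a b t = 1 := by
  have : 1 ≤ (t - a) / (b - a) := (one_le_div (by linarith)).mpr (by linarith)
  simp [ramp, min_eq_left this]

section RampPath

variable {X : Type*} [NormedAddCommGroup X] [NormedSpace ℝ X]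

noncomputable def rampPath (s : ℕ → ℝ) (y : ℕ → X) (N : ℕ) (t : ℝ) : X :=
  ∑ j ∈ Finset.range N, ramp (s (j + 1)) (s j) t • (y j - y (j + 1))

theorem continuous_rampPath (s : ℕ → ℝ) (y : ℕ → X) (N : ℕ) : Continuous (rampPath s y N) :=
  continuous_finsetSum _ fun _ _ => (continuous_ramp _ _).smul continuous_const

variable {s : ℕ → ℝ}

theorem rampPath_of_le (hs : StrictAnti s) (y : ℕ → X) {N : ℕ} {t : ℝ} (ht : t ≤ s N) :
    rampPath s y N t = 0 :=
  Finset.sum_eq_zero fun j hj => by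
    rw [ramp_of_le (hs j.lt_succ_self) (ht.trans (hs.antitone (Finset.mem_range.mp hj)))]
    exact zero_smul _ _

theorem rampPath_apply (hs : StrictAnti s) (y : ℕ → X) {N i : ℕ} (hi : i ≤ N) :
    rampPath s y N (s i) = y i - y N := by
  induction N with
  | zero => simp [rampPath, Nat.le_zero.mp hi]
  | succ N ih =>
    rw [rampPath, Finset.sum_range_succ, ← rampPath]
    rcases hi.eq_or_lt with rfl | hi
    · rw [rampPath_of_le hs y (hs N.lt_succ_self).le, ramp_of_le (hs N.lt_succ_self) le_rfl]
      simp
    · have hiN := Nat.lt_succ_iff.mp hi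
      rw [ih hiN, ramp_of_ge (hs N.lt_succ_self) (hs.antitone hiN), one_smul]
      abel

end RampPath

section Kset

variable {α : ℕ → ℝ}

theorem norm_smul_single (c : ℝ) (j : ℕ) : ‖(c • lp.single 2 j (1 : ℝ) : ellTwo)‖ = |c| := by
  rw [norm_smul, lp.norm_single (by norm_num)]
  simp

theorem strictAnti_shift_of_succ_lt (hdec : ∀ j : ℕ, 1 ≤ j → α (j + 1) < α j) :
    StrictAnti fun j => α (j + 1) :=
  strictAnti_nat_of_succ_lt fun j => hdec (j + 1) j.succ_pos

theorem apply_le_apply_of_succ_lt (hdec : ∀ j : ℕ, 1 ≤ j → α (j + 1) < α j) {i j : ℕ}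
    (hi : 1 ≤ i) (hij : i ≤ j) : α j ≤ α i := by
  induction j, hij using Nat.le_induction with
  | base => exact le_rfl
  | succ k hik ih => exact (hdec k (hi.trans hik)).le.trans ih

theorem Kset_subset_closedBall (hpos : ∀ j : ℕ, 1 ≤ j → 0 < α j)
    (hdec : ∀ j : ℕ, 1 ≤ j → α (j + 1) < α j) : Kset α ⊆ closedBall 0 (α 1) := by
  rintro x (⟨j, hj, rfl⟩ | rfl)
  · rw [mem_closedBall, dist_zero_right, norm_smul_single, abs_of_pos (hpos j hj)]
    exact apply_le_apply_of_succ_lt hdec le_rfl hj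
  · simpa using (hpos 1 le_rfl).le

theorem manifoldWidth_Kset_eq_zero (hpos : ∀ j : ℕ, 1 ≤ j → 0 < α j)
    (hdec : ∀ j : ℕ, 1 ≤ j → α (j + 1) < α j) (hlim : Filter.Tendsto α Filter.atTop (nhds 0))
    {n : ℕ} (hn : 0 < n) : manifoldWidth ellTwo (Kset α) n = 0 := by
  refine manifoldWidth_eq_zero_of_forall_approx fun ε hε => ?_
  obtain ⟨N, hN⟩ := Filter.eventually_atTop.mp (hlim.eventually (ge_mem_nhds hε))
  set y : ℕ → ellTwo := fun j => α (j + 1) • lp.single 2 (j + 1) (1 : ℝ)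
  have hy : ∀ j, ‖y j‖ = α (j + 1) := fun j =>
    (norm_smul_single _ _).trans (abs_of_pos (hpos _ j.succ_pos))
  have hs := strictAnti_shift_of_succ_lt hdec
  refine ⟨fun x _ => ‖x‖, fun v => rampPath (fun j => α (j + 1)) y N (v ⟨0, hn⟩),
    (continuous_pi fun _ => continuous_norm).continuousOn,
    (continuous_rampPath (fun j => α (j + 1)) y N).comp (continuous_apply _), ?_⟩
  rintro x (⟨_ | k, hk, rfl⟩ | rfl)
  · omega
  · change ‖y k - rampPath _ y N ‖y k‖‖ ≤ ε
    rw [hy]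
    rcases le_or_gt k N with hkN | hNk
    · rw [rampPath_apply hs y hkN, sub_sub_cancel, hy]
      exact hN (N + 1) N.le_succ
    · rw [rampPath_of_le hs y (hs.antitone hNk.le), sub_zero, hy]
      exact hN (k + 1) (by omega)
  · simpa [rampPath_of_le hs y (hpos _ N.succ_pos).le] using hε.le

noncomputable def Kpoint (α : ℕ → ℝ) (k : ℕ) : ellTwo :=
  if k = 0 then 0 else α k • lp.single 2 k (1 : ℝ)

theorem Kpoint_mem_Kset (k : ℕ) : Kpoint α k ∈ Kset α := by
  unfold Kpoint
  split_ifs with hk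
  · exact Or.inr rfl
  · exact Or.inl ⟨k, Nat.one_le_iff_ne_zero.mpr hk, rfl⟩

theorem Kpoint_apply (k i : ℕ) : Kpoint α k i = if i = k ∧ k ≠ 0 then α k else 0 := by
  unfold Kpoint
  split_ifs <;> simp_all [lp.single_apply]

theorem apply_le_dist_Kpoint (hpos : ∀ j : ℕ, 1 ≤ j → 0 < α j) {i j : ℕ} (hi : i ≠ 0)
    (hij : i ≠ j) : α i ≤ dist (Kpoint α i) (Kpoint α j) := by
  have := lp.norm_apply_le_norm two_ne_zero (Kpoint α i - Kpoint α j) i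
  rw [lp.coeFn_sub, Pi.sub_apply, Kpoint_apply, Kpoint_apply, if_pos ⟨rfl, hi⟩, if_neg (by tauto),
    sub_zero, Real.norm_of_nonneg (hpos i (Nat.one_le_iff_ne_zero.mpr hi)).le] at this
  rwa [dist_eq_norm]

theorem le_dist_Kpoint (hpos : ∀ j : ℕ, 1 ≤ j → 0 < α j)
    (hdec : ∀ j : ℕ, 1 ≤ j → α (j + 1) < α j) {m i j : ℕ} (hi : i ≤ m) (hj : j ≤ m)
    (hij : i ≠ j) : α m ≤ dist (Kpoint α i) (Kpoint α j) := by
  wlog hi0 : i ≠ 0 generalizing i j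
  · rw [dist_comm]
    exact this hj hi hij.symm (by omega)
  exact (apply_le_apply_of_succ_lt hdec (Nat.one_le_iff_ne_zero.mpr hi0) hi).trans
    (apply_le_dist_Kpoint hpos hi0 hij)

theorem half_le_entropyNumber_Kset (hpos : ∀ j : ℕ, 1 ≤ j → 0 < α j)
    (hdec : ∀ j : ℕ, 1 ≤ j → α (j + 1) < α j) (n : ℕ) :
    1 / 2 * α (2 ^ n) ≤ entropyNumber ellTwo (Kset α) n := by
  rw [one_div_mul_eq_div]
  exact le_entropyNumber_of_pairwise_le_dist
    (isBounded_closedBall.subset (Kset_subset_closedBall hpos hdec)) (Nat.lt_succ_self _)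
    (fun i => Kpoint α i) (fun i => Kpoint_mem_Kset i) fun i j hij =>
      le_dist_Kpoint hpos hdec (Nat.lt_succ_iff.mp i.2) (Nat.lt_succ_iff.mp j.2)
        (Fin.val_ne_of_ne hij)

end Kset

section LogDecay

variable {r : ℝ}

theorem one_add_logb_pos {j : ℕ} (hj : 1 ≤ j) : 0 < 1 + Real.logb 2 j := by
  have : 0 ≤ Real.logb 2 j := Real.logb_nonneg one_lt_two (by exact_mod_cast hj)
  linarith

theorem logDecay_pos {j : ℕ} (hj : 1 ≤ j) : 0 < (1 + Real.logb 2 j) ^ (-r / 2) :=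
  Real.rpow_pos_of_pos (one_add_logb_pos hj) _

theorem logDecay_succ_lt (hr : 0 < r) {j : ℕ} (hj : 1 ≤ j) :
    (1 + Real.logb 2 ((j + 1 : ℕ) : ℝ)) ^ (-r / 2) < (1 + Real.logb 2 j) ^ (-r / 2) := by
  have hj' : (0 : ℝ) < j := by exact_mod_cast hj
  refine Real.rpow_lt_rpow_of_neg (one_add_logb_pos hj) ?_ (by linarith)
  push_cast
  linarith [Real.logb_lt_logb one_lt_two hj' (lt_add_one (j : ℝ))]

theorem tendsto_logDecay (hr : 0 < r) :
    Filter.Tendsto (fun j : ℕ => (1 + Real.logb 2 j) ^ (-r / 2)) Filter.atTop (nhds 0) := by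
  have hlog : Filter.Tendsto (fun j : ℕ => 1 + Real.logb 2 j) Filter.atTop Filter.atTop :=
    Filter.tendsto_atTop_add_const_left _ _
      ((Real.tendsto_logb_atTop one_lt_two).comp tendsto_natCast_atTop_atTop)
  simpa only [neg_div, Function.comp_def] using (tendsto_rpow_neg_atTop (half_pos hr)).comp hlog

theorem logDecay_two_pow (n : ℕ) :
    (1 + Real.logb 2 ((2 ^ n : ℕ) : ℝ)) ^ (-r / 2) = ((n : ℝ) + 1) ^ (-r / 2) := by
  push_cast
  rw [Real.logb_pow, Real.logb_self_eq_one one_lt_two, mul_one, add_comm]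

end LogDecay

/-- For K = {α_j e_j : j ≥ 1} ∪ {0} with (α_j) strictly decreasing to 0,
the manifold widths of K all vanish while ε_n(K) ≥ α_{2^n}/2; in particular, with
α_j = (1+log₂ j)^{-r/2}, one gets δ_n(K) = 0 ≤ n^{-r} and ε_n(K) ≥ (1/2)(n+1)^{-r/2},
so no Carl-type inequality holds for the manifold widths. -/
theorem stmt9 (α : ℕ → ℝ) (hpos : ∀ j : ℕ, 1 ≤ j → 0 < α j)
    (hdec : ∀ j : ℕ, 1 ≤ j → α (j + 1) < α j)
    (hlim : Filter.Tendsto α Filter.atTop (nhds 0)) :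
    (∀ n : ℕ, 1 ≤ n → manifoldWidth ellTwo (Kset α) n = 0) ∧
    (∀ n : ℕ, 1 ≤ n → (1 / 2) * α (2 ^ n) ≤ entropyNumber ellTwo (Kset α) n) ∧
    (∀ r : ℝ, 0 < r → ∀ n : ℕ, 1 ≤ n →
      manifoldWidth ellTwo (Kset (fun j => (1 + Real.logb 2 j) ^ (-r / 2))) n = 0 ∧
      manifoldWidth ellTwo (Kset (fun j => (1 + Real.logb 2 j) ^ (-r / 2))) n ≤ (n : ℝ) ^ (-r) ∧
      (1 / 2) * ((n : ℝ) + 1) ^ (-r / 2) ≤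
        entropyNumber ellTwo (Kset (fun j => (1 + Real.logb 2 j) ^ (-r / 2))) n) := by
  refine ⟨fun n hn => manifoldWidth_Kset_eq_zero hpos hdec hlim hn,
    fun n _ => half_le_entropyNumber_Kset hpos hdec n, fun r hr n hn => ?_⟩
  have hwidth := manifoldWidth_Kset_eq_zero (fun _ => logDecay_pos (r := r))
    (fun _ => logDecay_succ_lt hr) (tendsto_logDecay hr) hn
  have hentropy := half_le_entropyNumber_Kset (fun _ => logDecay_pos (r := r))
    (fun _ => logDecay_succ_lt hr) n
  rw [logDecay_two_pow] at hentropy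
  exact ⟨hwidth, hwidth ▸ by positivity, hentropy⟩
end

section
/- Let k, n, N be positive integers with 2k ≤ N, let C₁ ≥ 1, and let Φ : ℝ^N → ℝ^n be a linear map such that ‖x‖_{ℓ₂} ≤ ‖Φx‖_{ℓ₂} ≤ C₁‖x‖_{ℓ₂} for every x ∈ Σ_{2k}. Then there exist a map a : ℝ^N → ℝ^n that is C₁-Lipschitz with respect to the Euclidean norms, and a map M : ℝ^n → ℝ^N that is 1-Lipschitz with respect to the Euclidean norms, such that M(a(x)) = x for every x ∈ Σ_k, and ‖x − M(a(x))‖_{ℓ₂} ≤ (C₁+1) σ_k(x)_{ℓ₂} for every x ∈ ℝ^N. -/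
open Metric

/-- The set of m-sparse vectors in ℝ^N (with the Euclidean norm). -/
def sparseVectors (N m : ℕ) : Set (EuclideanSpace ℝ (Fin N)) :=
  { x | Set.ncard { i | x i ≠ 0 } ≤ m }

/-!
Differences of `k`-sparse vectors are `2k`-sparse, so `Φ` is bi-Lipschitz on `Σ_k`. Kirszbraun's
theorem extends `Φ` on `Σ_k` to a `C₁`-Lipschitz encoder `a`, and the inverse of `Φ` on `Φ(Σ_k)`
to a `1`-Lipschitz decoder `M`. Then `M ∘ a` fixes `Σ_k`, and for `y ∈ Σ_k`
`‖x - M (a x)‖ ≤ ‖x - y‖ + ‖M (a y) - M (a x)‖ ≤ (1 + C₁) ‖x - y‖`.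

Kirszbraun's theorem reduces, by Zorn's lemma and compactness of balls, to a finite one-point
extension: given `‖b i - b j‖ ≤ ‖a i - a j‖` and `x`, find `y` with `‖y - b i‖ ≤ ‖x - a i‖`.
Minimize `max_i (‖y - b i‖² - ‖x - a i‖²)`. If the minimum `δ` were positive, the minimizer `y₀`
would lie in the convex hull of the centres `b i` active at `y₀` (otherwise moving against a
separating functional decreases every active term), say `y₀ = ∑ wᵢ bᵢ`, and the variance identity
for the `bᵢ` and for the `aᵢ` would give `∑ wᵢ ‖y₀ - bᵢ‖² ≤ ∑ wᵢ ‖x - aᵢ‖²`, contradicting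
`‖y₀ - bᵢ‖² = ‖x - aᵢ‖² + δ` on the active indices.
-/

open Finset Filter Topology
open scoped RealInnerProductSpace NNReal

section Kirszbraun

variable {ι E F : Type*} [NormedAddCommGroup E] [InnerProductSpace ℝ E]
  [NormedAddCommGroup F] [InnerProductSpace ℝ F]

lemma sum_sum_mul_norm_sub_sq [Fintype ι] {w : ι → ℝ} (hw : ∑ i, w i = 1) (u : ι → F) :
    ∑ i, ∑ j, w i * w j * ‖u i - u j‖ ^ 2
      = 2 * ∑ i, w i * ‖u i‖ ^ 2 - 2 * ‖∑ i, w i • u i‖ ^ 2 := by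
  have hsq : ‖∑ i, w i • u i‖ ^ 2 = ∑ i, ∑ j, w i * w j * ⟪u i, u j⟫ := by
    simp_rw [← real_inner_self_eq_norm_sq, sum_inner, inner_sum, real_inner_smul_left,
      real_inner_smul_right, mul_assoc]
  have hleft : ∑ i, ∑ j, w i * w j * ‖u i‖ ^ 2 = ∑ i, w i * ‖u i‖ ^ 2 := by
    refine sum_congr rfl fun i _ => ?_
    rw [← sum_mul, ← mul_sum, hw, mul_one]
  have hright : ∑ i, ∑ j, w i * w j * ‖u j‖ ^ 2 = ∑ i, w i * ‖u i‖ ^ 2 := by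
    rw [sum_comm]
    refine sum_congr rfl fun j _ => ?_
    rw [← sum_mul, ← sum_mul, hw, one_mul]
  have hexpand : ∀ i j, w i * w j * ‖u i - u j‖ ^ 2
      = w i * w j * ‖u i‖ ^ 2 + w i * w j * ‖u j‖ ^ 2 - 2 * (w i * w j * ⟪u i, u j⟫) := by
    intro i j
    rw [norm_sub_sq_real]
    ring
  simp only [hexpand, sum_sub_distrib, sum_add_distrib, ← mul_sum, hleft, hright, hsq]
  ring

lemma sum_mul_norm_sub_sq_le_of_norm_sub_le [Fintype ι] {w : ι → ℝ} (hw₀ : ∀ i, 0 ≤ w i)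
    (hw₁ : ∑ i, w i = 1) {a : ι → E} {b : ι → F} (hab : ∀ i j, ‖b i - b j‖ ≤ ‖a i - a j‖)
    (x : E) :
    ∑ i, w i * ‖∑ j, w j • b j - b i‖ ^ 2 ≤ ∑ i, w i * ‖x - a i‖ ^ 2 := by
  set y := ∑ j, w j • b j
  have hcentered : ∑ i, w i • (b i - y) = 0 := by
    simp_rw [smul_sub, sum_sub_distrib, ← sum_smul, hw₁, one_smul, y, sub_self]
  have hb := sum_sum_mul_norm_sub_sq hw₁ (fun i => b i - y)
  have ha := sum_sum_mul_norm_sub_sq hw₁ (fun i => a i - x)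
  have hpairs : ∑ i, ∑ j, w i * w j * ‖(b i - y) - (b j - y)‖ ^ 2
      ≤ ∑ i, ∑ j, w i * w j * ‖(a i - x) - (a j - x)‖ ^ 2 := by
    gcongr with i _ j _
    · exact mul_nonneg (hw₀ i) (hw₀ j)
    · simpa only [sub_sub_sub_cancel_right] using hab i j
  simp only [hcentered, norm_zero] at hb
  simp only [norm_sub_rev (b _) y, norm_sub_rev (a _) x] at hb ha
  nlinarith [norm_nonneg (∑ i, w i • (a i - x))]

lemma norm_sub_smul_sub_sq (y w z : F) (s : ℝ) :
    ‖y - s • w - z‖ ^ 2 = ‖y - z‖ ^ 2 - 2 * s * ⟪y - z, w⟫ + s ^ 2 * ‖w‖ ^ 2 := by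
  rw [sub_right_comm, norm_sub_sq_real, real_inner_smul_right, norm_smul, Real.norm_eq_abs,
    mul_pow, sq_abs]
  ring

lemma mem_convexHull_of_forall_exists_le_norm_sub_sq [Finite ι] [CompleteSpace F]
    {b : ι → F} {r : ι → ℝ} {y₀ : F} (hy₀ : ∀ i, ‖y₀ - b i‖ ^ 2 ≤ r i)
    (hmin : ∀ y, ∃ i, r i ≤ ‖y - b i‖ ^ 2) :
    y₀ ∈ convexHull ℝ (b '' {i | ‖y₀ - b i‖ ^ 2 = r i}) := by
  by_contra hy
  have hclosed : IsClosed (convexHull ℝ (b '' {i | ‖y₀ - b i‖ ^ 2 = r i})) :=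
    ((Set.toFinite _).image b).isCompact_convexHull (𝕜 := ℝ) |>.isClosed
  obtain ⟨f, u, hf, hu⟩ := geometric_hahn_banach_closed_point (convex_convexHull ℝ _) hclosed hy
  set w := (InnerProductSpace.toDual ℝ F).symm f
  have hw : ∀ z, ⟪w, z⟫ = f z := fun z => InnerProductSpace.toDual_symm_apply
  -- moving `y₀` a little in the direction `-w` brings it strictly inside every ball
  have hmove : ∀ i, ∀ᶠ s in 𝓝[>] (0 : ℝ), ‖y₀ - s • w - b i‖ ^ 2 < r i := by
    intro i
    rcases (hy₀ i).lt_or_eq with hlt | heq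
    · have hcont : Continuous fun s : ℝ => ‖y₀ - s • w - b i‖ ^ 2 := by fun_prop
      refine nhdsWithin_le_nhds (hcont.tendsto' 0 _ (by simp) |>.eventually_lt_const hlt)
    · have hpos : 0 < ⟪y₀ - b i, w⟫ := by
        have hbi := hf _ (subset_convexHull ℝ _ ⟨i, heq, rfl⟩)
        rw [real_inner_comm, hw, map_sub]
        linarith
      have hsmall : ∀ᶠ s in 𝓝 (0 : ℝ), s * ‖w‖ ^ 2 < 2 * ⟪y₀ - b i, w⟫ :=
        (continuous_id.mul continuous_const).tendsto' 0 0 (zero_mul _) |>.eventually_lt_const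
          (by linarith)
      filter_upwards [nhdsWithin_le_nhds hsmall, self_mem_nhdsWithin] with s hs (hs₀ : 0 < s)
      rw [norm_sub_smul_sub_sq, heq]
      nlinarith
  obtain ⟨s, hs⟩ := (eventually_all.2 hmove).exists
  obtain ⟨i, hi⟩ := hmin (y₀ - s • w)
  exact (hs i).not_ge hi

lemma exists_forall_norm_sub_le_of_finite [Finite ι] [FiniteDimensional ℝ F] (a : ι → E)
    (b : ι → F) (hab : ∀ i j, ‖b i - b j‖ ≤ ‖a i - a j‖) (x : E) :
    ∃ y, ∀ i, ‖y - b i‖ ≤ ‖x - a i‖ := by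
  cases nonempty_fintype ι
  rcases isEmpty_or_nonempty ι with hι | hι
  · exact ⟨0, isEmptyElim⟩
  obtain ⟨i₀⟩ := id hι
  set m : F → ℝ := fun y => univ.sup' univ_nonempty fun i => ‖y - b i‖ ^ 2 - ‖x - a i‖ ^ 2
  have hm_ge : ∀ y i, ‖y - b i‖ ^ 2 - ‖x - a i‖ ^ 2 ≤ m y := fun y i =>
    le_sup' (fun i => ‖y - b i‖ ^ 2 - ‖x - a i‖ ^ 2) (mem_univ i)
  have hm_cont : Continuous m := Continuous.finset_sup'_apply _ fun i _ => by fun_prop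
  have hm_coercive : Tendsto m (cocompact F) atTop := by
    refine tendsto_atTop_mono (hm_ge · i₀) (tendsto_atTop_add_const_right _ _ ?_)
    simp only [← dist_eq_norm]
    exact (tendsto_pow_atTop two_ne_zero).comp (tendsto_dist_right_cocompact_atTop (b i₀))
  obtain ⟨y₀, hy₀⟩ := hm_cont.exists_forall_le hm_coercive
  by_cases hδ : m y₀ ≤ 0
  · refine ⟨y₀, fun i => ?_⟩
    have := hm_ge y₀ i
    exact pow_le_pow_iff_left₀ (norm_nonneg _) (norm_nonneg _) two_ne_zero |>.1 (by linarith)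
  exfalso
  have hhull := mem_convexHull_of_forall_exists_le_norm_sub_sq
    (b := b) (r := fun i => ‖x - a i‖ ^ 2 + m y₀) (fun i => by linarith [hm_ge y₀ i])
    (fun y => by
      obtain ⟨i, -, hi⟩ := exists_mem_eq_sup' univ_nonempty
        fun i => ‖y - b i‖ ^ 2 - ‖x - a i‖ ^ 2
      exact ⟨i, by linarith [hy₀ y]⟩)
  obtain ⟨κ, _, w, z, hw₀, hw₁, hz, hy₀z⟩ := mem_convexHull_iff_exists_fintype.1 hhull
  choose j hj_active hj using hz
  have key := sum_mul_norm_sub_sq_le_of_norm_sub_le hw₀ hw₁ (a := a ∘ j) (b := b ∘ j)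
    (fun k l => hab (j k) (j l)) x
  simp only [← hj] at hy₀z
  simp only [Function.comp_apply, hy₀z] at key
  simp only [Set.mem_ofPred_eq] at hj_active
  simp only [hj_active, mul_add, sum_add_distrib, ← sum_mul, hw₁] at key
  linarith

lemma exists_forall_norm_sub_le [FiniteDimensional ℝ F] (a : ι → E) (b : ι → F)
    (hab : ∀ i j, ‖b i - b j‖ ≤ ‖a i - a j‖) (x : E) :
    ∃ y, ∀ i, ‖y - b i‖ ≤ ‖x - a i‖ := by
  classical
  rcases isEmpty_or_nonempty ι with hι | ⟨⟨i₀⟩⟩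
  · exact ⟨0, isEmptyElim⟩
  have hballs : (closedBall (b i₀) ‖x - a i₀‖ ∩ ⋂ i, closedBall (b i) ‖x - a i‖).Nonempty := by
    refine (isCompact_closedBall _ _).inter_iInter_nonempty _ (fun _ => isClosed_closedBall)
      fun u => ?_
    obtain ⟨y, hy⟩ := exists_forall_norm_sub_le_of_finite (ι := ↥(insert i₀ u))
      (fun i => a i) (fun i => b i) (fun i j => hab i j) x
    refine ⟨y, ?_, Set.mem_iInter₂.2 fun i hi => ?_⟩
    · simpa [dist_eq_norm] using hy ⟨i₀, mem_insert_self _ _⟩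
    · simpa [dist_eq_norm] using hy ⟨i, mem_insert_of_mem hi⟩
  obtain ⟨y, -, hy⟩ := hballs
  exact ⟨y, fun i => by simpa [dist_eq_norm] using Set.mem_iInter.1 hy i⟩

theorem LipschitzOnWith.exists_lipschitzWith_extension [FiniteDimensional ℝ F] {K : ℝ≥0}
    {s : Set E} {f : E → F} (hf : LipschitzOnWith K f s) :
    ∃ g : E → F, LipschitzWith K g ∧ Set.EqOn f g s := by
  set 𝒮 : Set (Set (E × F)) := {G | ∀ p ∈ G, ∀ q ∈ G, ‖p.2 - q.2‖ ≤ K * ‖p.1 - q.1‖}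
  have hgraph : (fun x => (x, f x)) '' s ∈ 𝒮 := by
    rintro _ ⟨p, hp, rfl⟩ _ ⟨q, hq, rfl⟩
    simpa [dist_eq_norm] using hf.dist_le_mul p hp q hq
  have hchain : ∀ c ⊆ 𝒮, IsChain (· ⊆ ·) c → c.Nonempty → ∃ ub ∈ 𝒮, ∀ G ∈ c, G ⊆ ub := by
    refine fun c hc hchain _ => ⟨⋃₀ c, ?_, fun G hG => Set.subset_sUnion_of_mem hG⟩
    rintro p ⟨G₁, hG₁, hp⟩ q ⟨G₂, hG₂, hq⟩
    rcases hchain.total hG₁ hG₂ with h | h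
    · exact hc hG₂ p (h hp) q hq
    · exact hc hG₁ p hp q (h hq)
  obtain ⟨G, hfG, hGmax⟩ := zorn_subset_nonempty 𝒮 hchain _ hgraph
  have hG : G ∈ 𝒮 := hGmax.prop
  have hnorm_smul : ∀ v : E, ‖(K : ℝ) • v‖ = K * ‖v‖ := fun v => by
    rw [norm_smul, Real.norm_of_nonneg K.coe_nonneg]
  -- the one-point extension, indexed by the points of `G` itself
  have htotal : ∀ x, ∃ y, (x, y) ∈ G := by
    intro x
    obtain ⟨y, hy⟩ := exists_forall_norm_sub_le (fun p : G => (K : ℝ) • p.1.1)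
      (fun p : G => p.1.2) (fun p q => by simpa [← smul_sub, hnorm_smul] using hG _ p.2 _ q.2)
      ((K : ℝ) • x)
    simp only [← smul_sub, hnorm_smul] at hy
    have hins : insert (x, y) G ∈ 𝒮 := by
      rintro p (rfl | hp) q (rfl | hq)
      · simp
      · exact hy ⟨q, hq⟩
      · simpa only [norm_sub_rev] using hy ⟨p, hp⟩
      · exact hG p hp q hq
    exact ⟨y, hGmax.eq_of_subset hins (Set.subset_insert _ _) ▸ Set.mem_insert _ _⟩
  choose g hg using htotal
  refine ⟨g, LipschitzWith.of_dist_le_mul fun x y => ?_, fun x hx => ?_⟩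
  · simpa [dist_eq_norm] using hG _ (hg x) _ (hg y)
  · have h := hG _ (hfG ⟨x, hx, rfl⟩) _ (hg x)
    rw [sub_self, norm_zero, mul_zero] at h
    exact sub_eq_zero.1 (norm_le_zero_iff.1 h)

end Kirszbraun

lemma zero_mem_sparseVectors (N m : ℕ) : (0 : EuclideanSpace ℝ (Fin N)) ∈ sparseVectors N m := by
  simp [sparseVectors]

lemma sub_mem_sparseVectors_add {N k m : ℕ} {x y : EuclideanSpace ℝ (Fin N)}
    (hx : x ∈ sparseVectors N k) (hy : y ∈ sparseVectors N m) :
    x - y ∈ sparseVectors N (k + m) := by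
  have hsupp : {i | (x - y) i ≠ 0} ⊆ {i | x i ≠ 0} ∪ {i | y i ≠ 0} :=
    Function.support_sub (fun i => x i) (fun i => y i)
  calc Set.ncard {i | (x - y) i ≠ 0}
      ≤ Set.ncard ({i | x i ≠ 0} ∪ {i | y i ≠ 0}) := Set.ncard_le_ncard hsupp (Set.toFinite _)
    _ ≤ Set.ncard {i | x i ≠ 0} + Set.ncard {i | y i ≠ 0} := Set.ncard_union_le _ _
    _ ≤ k + m := add_le_add hx hy

lemma lipschitzOnWith_invFunOn_image {X Y : Type*} [PseudoMetricSpace X] [PseudoMetricSpace Y]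
    [Nonempty X] {K : ℝ≥0} {f : X → Y} {s : Set X}
    (hf : ∀ x ∈ s, ∀ y ∈ s, dist x y ≤ K * dist (f x) (f y)) :
    LipschitzOnWith K (Function.invFunOn f s) (f '' s) := by
  refine LipschitzOnWith.of_dist_le_mul ?_
  rintro _ ⟨x, hx, rfl⟩ _ ⟨y, hy, rfl⟩
  have hx' : ∃ x' ∈ s, f x' = f x := ⟨x, hx, rfl⟩
  have hy' : ∃ y' ∈ s, f y' = f y := ⟨y, hy, rfl⟩
  simpa only [Function.invFunOn_eq hx', Function.invFunOn_eq hy'] using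
    hf _ (Function.invFunOn_mem hx') _ (Function.invFunOn_mem hy')

lemma dist_comp_le_mul_infDist {X Y : Type*} [PseudoMetricSpace X] [PseudoMetricSpace Y]
    {a : X → Y} {M : Y → X} {K L : ℝ≥0} (ha : LipschitzWith K a) (hM : LipschitzWith L M)
    {S : Set X} (hS : S.Nonempty) (hMa : ∀ y ∈ S, M (a y) = y) (x : X) :
    dist x (M (a x)) ≤ (1 + L * K) * infDist x S := by
  rw [mul_comm, ← div_le_iff₀ (by positivity), le_infDist hS]
  intro y hy
  rw [div_le_iff₀ (by positivity)]
  calc dist x (M (a x)) ≤ dist x y + dist (M (a y)) (M (a x)) := by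
        rw [hMa y hy]; exact dist_triangle _ _ _
    _ ≤ dist x y + L * (K * dist y x) := by
        gcongr
        exact (hM.dist_le_mul _ _).trans (by gcongr; exact ha.dist_le_mul _ _)
    _ = dist x y * (1 + L * K) := by rw [dist_comm y x]; ring

theorem stmt19_general {k n N : ℕ} (C₁ : ℝ) (hC₁ : 1 ≤ C₁)
    (Φ : EuclideanSpace ℝ (Fin N) →ₗ[ℝ] EuclideanSpace ℝ (Fin n))
    (hΦ : ∀ x ∈ sparseVectors N (2 * k), ‖x‖ ≤ ‖Φ x‖ ∧ ‖Φ x‖ ≤ C₁ * ‖x‖) :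
    ∃ (a : EuclideanSpace ℝ (Fin N) → EuclideanSpace ℝ (Fin n))
      (M : EuclideanSpace ℝ (Fin n) → EuclideanSpace ℝ (Fin N)),
      (∀ x y, ‖a x - a y‖ ≤ C₁ * ‖x - y‖) ∧
      (∀ x y, ‖M x - M y‖ ≤ ‖x - y‖) ∧
      (∀ x ∈ sparseVectors N k, M (a x) = x) ∧
      (∀ x : EuclideanSpace ℝ (Fin N),
        ‖x - M (a x)‖ ≤ (C₁ + 1) * infDist x (sparseVectors N k)) := by
  set S := sparseVectors N k
  let K : ℝ≥0 := ⟨C₁, by linarith⟩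
  have hK : (K : ℝ) = C₁ := rfl
  have hΦS : ∀ x ∈ S, ∀ y ∈ S, ‖x - y‖ ≤ ‖Φ x - Φ y‖ ∧ ‖Φ x - Φ y‖ ≤ C₁ * ‖x - y‖ :=
    fun x hx y hy => map_sub Φ x y ▸ hΦ _ (two_mul k ▸ sub_mem_sparseVectors_add hx hy)
  obtain ⟨a, ha, haΦ⟩ := (LipschitzOnWith.of_dist_le_mul (K := K) (f := Φ) fun x hx y hy => by
    simpa only [dist_eq_norm, hK] using (hΦS x hx y hy).2).exists_lipschitzWith_extension
  obtain ⟨M, hM, hMΦ⟩ := (lipschitzOnWith_invFunOn_image (K := 1) (f := Φ) fun x hx y hy => by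
    simpa only [dist_eq_norm, NNReal.coe_one, one_mul] using (hΦS x hx y hy).1
    ).exists_lipschitzWith_extension
  have hinj : Set.InjOn Φ S := fun x hx y hy hxy => sub_eq_zero.1 <| norm_le_zero_iff.1 <| by
    simpa [hxy] using (hΦS x hx y hy).1
  have hMa : ∀ x ∈ S, M (a x) = x := fun x hx => by
    rw [← haΦ hx, ← hMΦ (Set.mem_image_of_mem Φ hx), hinj.leftInvOn_invFunOn hx]
  refine ⟨a, M, fun x y => ?_, fun x y => ?_, hMa, fun x => ?_⟩
  · simpa only [dist_eq_norm, hK] using ha.dist_le_mul x y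
  · simpa only [dist_eq_norm, NNReal.coe_one, one_mul] using hM.dist_le_mul x y
  · have h := dist_comp_le_mul_infDist (S := S) ha hM ⟨0, zero_mem_sparseVectors N k⟩ hMa x
    simpa only [dist_eq_norm, NNReal.coe_one, one_mul, hK, add_comm 1 C₁] using h

/-- If a linear map Φ : ℝ^N → ℝ^n satisfies ‖x‖₂ ≤ ‖Φx‖₂ ≤ C₁‖x‖₂ on the set
Σ_{2k} of 2k-sparse vectors, then there exist a C₁-Lipschitz map a : ℝ^N → ℝ^n and a
1-Lipschitz map M : ℝ^n → ℝ^N (Euclidean norms) with M(a(x)) = x on Σ_k and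
‖x − M(a(x))‖₂ ≤ (C₁+1)σ_k(x)₂ for every x ∈ ℝ^N. -/
theorem stmt19 {k n N : ℕ} (hk : 0 < k) (hn : 0 < n) (hN : 0 < N) (h2k : 2 * k ≤ N)
    (C₁ : ℝ) (hC₁ : 1 ≤ C₁)
    (Φ : EuclideanSpace ℝ (Fin N) →ₗ[ℝ] EuclideanSpace ℝ (Fin n))
    (hΦ : ∀ x ∈ sparseVectors N (2 * k), ‖x‖ ≤ ‖Φ x‖ ∧ ‖Φ x‖ ≤ C₁ * ‖x‖) :
    ∃ (a : EuclideanSpace ℝ (Fin N) → EuclideanSpace ℝ (Fin n))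
      (M : EuclideanSpace ℝ (Fin n) → EuclideanSpace ℝ (Fin N)),
      (∀ x y, ‖a x - a y‖ ≤ C₁ * ‖x - y‖) ∧
      (∀ x y, ‖M x - M y‖ ≤ ‖x - y‖) ∧
      (∀ x ∈ sparseVectors N k, M (a x) = x) ∧
      (∀ x : EuclideanSpace ℝ (Fin N),
        ‖x - M (a x)‖ ≤ (C₁ + 1) * infDist x (sparseVectors N k)) :=
  stmt19_general C₁ hC₁ Φ hΦ
end
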